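/- Let l be an even positive integer and p, q odd positive integers with p + q = l. Then the adjacency spectral radius of K_p + K_q is at most that of K_{l-1}^+, with equality if and only if K_p + K_q is isomorphic to K_{l-1}^+ (i.e., p = 1 or q = 1). -/

import Mathlib

open SimpleGraph

open scoped Classical in
/-- The adjacency spectral radius of a finite simple graph: the largest real
eigenvalue of its adjacency matrix. -/
noncomputable def specRad {V : Type*} [Fintype V] (G : SimpleGraph V) : ℝ :=
  sSup {μ : ℝ | ∃ v : V → ℝ, v ≠ 0 ∧
    Matrix.mulVec (Matrix.of fun i j => if G.Adj i j then (1:ℝ) else 0) v = μ • v}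

/-- `K_p + K_q`: the disjoint union of `K_p` and `K_q` together with one extra
edge joining a vertex of `K_p` to a vertex of `K_q`. -/
def KplusK (p q : ℕ) (hp : 0 < p) (hq : 0 < q) : SimpleGraph (Fin p ⊕ Fin q) :=
  ((⊤ : SimpleGraph (Fin p)) ⊕g (⊤ : SimpleGraph (Fin q))) ⊔
    SimpleGraph.fromEdgeSet {s(Sum.inl ⟨0, hp⟩, Sum.inr ⟨0, hq⟩)}

/-!
By Gershgorin, the spectral radius of a graph is at most its maximum degree. If `p, q ≥ 2`, every
vertex of `K_p + K_q` misses some other vertex, so its maximum degree is at most `l - 2`. On the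
other hand `K_{l-1}^+` contains `K_{l-1}`, whose spectral radius is `l - 2`, and the Rayleigh
quotient of the all-ones vector on `K_{l-1}`, perturbed by a small weight on the pendant vertex,
is strictly larger than `l - 2`. If `p = 1` or `q = 1`, the two graphs are isomorphic.
-/

open Matrix Module.End

theorem Matrix.mem_spectrum_iff_exists_mulVec_eq_smul {K n : Type*} [Field K] [Fintype n]
    [DecidableEq n] {A : Matrix n n K} {μ : K} :
    μ ∈ spectrum K A ↔ ∃ v : n → K, v ≠ 0 ∧ A *ᵥ v = μ • v := by
  rw [← spectrum_toLin', ← hasEigenvalue_iff_mem_spectrum, hasEigenvalue_iff,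
    Submodule.ne_bot_iff]
  simp [and_comm]

theorem Matrix.IsHermitian.dotProduct_mulVec_le_sSup_spectrum {n : Type*} [Fintype n]
    [DecidableEq n] {A : Matrix n n ℝ} (hA : A.IsHermitian) (x : n → ℝ) :
    x ⬝ᵥ A *ᵥ x ≤ sSup (spectrum ℝ A) * (x ⬝ᵥ x) := by
  set c := sSup (spectrum ℝ A)
  have hpsd : (algebraMap ℝ _ c - A).PosSemidef := by
    refine posSemidef_iff_isHermitian_and_spectrum_nonneg.2
      ⟨(isHermitian_diagonal _).sub hA, ?_⟩
    rw [← spectrum.singleton_sub_eq]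
    rintro _ ⟨_, rfl, μ, hμ, rfl⟩
    exact sub_nonneg.2 (le_csSup A.finite_spectrum.bddAbove hμ)
  have := hpsd.dotProduct_mulVec_nonneg x
  rw [star_trivial, sub_mulVec, dotProduct_sub, Algebra.algebraMap_eq_smul_one, smul_mulVec,
    one_mulVec, dotProduct_smul, smul_eq_mul] at this
  linarith

section SpectralRadius

variable {V : Type*} [Fintype V] (G : SimpleGraph V) [DecidableRel G.Adj]

theorem specRad_eq_sSup_spectrum [DecidableEq V] :
    specRad G = sSup (spectrum ℝ (G.adjMatrix ℝ)) := by
  unfold specRad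
  congr 1
  ext μ
  rw [Matrix.mem_spectrum_iff_exists_mulVec_eq_smul, Set.mem_ofPred_eq, adjMatrix]
  convert Iff.rfl

theorem SimpleGraph.le_maxDegree_of_mem_spectrum_adjMatrix [DecidableEq V] {μ : ℝ}
    (hμ : μ ∈ spectrum ℝ (G.adjMatrix ℝ)) : μ ≤ G.maxDegree := by
  rw [← spectrum_toLin', ← hasEigenvalue_iff_mem_spectrum] at hμ
  obtain ⟨k, hk⟩ := eigenvalue_mem_ball hμ
  have hrow : ∑ j ∈ Finset.univ.erase k, ‖G.adjMatrix ℝ k j‖ = G.degree k := by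
    rw [Finset.sum_erase _ (by simp)]
    simp [apply_ite abs, Finset.sum_boole, ← card_neighborFinset_eq_degree,
      neighborFinset_eq_filter]
  rw [Metric.mem_closedBall, Real.dist_eq, adjMatrix_apply, if_neg (G.loopless.irrefl k),
    sub_zero, hrow] at hk
  exact (le_abs_self μ).trans (hk.trans (mod_cast G.degree_le_maxDegree k))

theorem specRad_le_maxDegree : specRad G ≤ G.maxDegree := by
  classical
  rw [specRad_eq_sSup_spectrum]
  exact Real.sSup_le (fun μ hμ => G.le_maxDegree_of_mem_spectrum_adjMatrix hμ)
    (Nat.cast_nonneg _)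

theorem dotProduct_adjMatrix_mulVec_le_specRad_mul (x : V → ℝ) :
    x ⬝ᵥ G.adjMatrix ℝ *ᵥ x ≤ specRad G * (x ⬝ᵥ x) := by
  classical
  rw [specRad_eq_sSup_spectrum]
  exact (G.isHermitian_adjMatrix ℝ).dotProduct_mulVec_le_sSup_spectrum x

theorem SimpleGraph.degree_add_two_le_card_of_not_adj {v w : V} (hvw : v ≠ w)
    (hadj : ¬G.Adj v w) : G.degree v + 2 ≤ Fintype.card V := by
  classical
  have hsub : G.neighborFinset v ⊆ Finset.univ \ {v, w} := by
    intro u hu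
    rw [mem_neighborFinset] at hu
    simp only [Finset.mem_sdiff, Finset.mem_univ, Finset.mem_insert, Finset.mem_singleton,
      true_and]
    rintro (rfl | rfl)
    exacts [G.loopless.irrefl _ hu, hadj hu]
  have hcard := Finset.card_le_card hsub
  rw [Finset.card_univ_sdiff, Finset.card_pair hvw, card_neighborFinset_eq_degree] at hcard
  have hpair := Finset.card_le_univ ({v, w} : Finset V)
  rw [Finset.card_pair hvw] at hpair
  omega

end SpectralRadius

theorem SimpleGraph.Iso.specRad_eq {V W : Type*} [Fintype V] [Fintype W] {G : SimpleGraph V}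
    {H : SimpleGraph W} (e : G ≃g H) : specRad G = specRad H := by
  classical
  have hreindex : H.adjMatrix ℝ = reindexAlgEquiv ℝ ℝ e.toEquiv (G.adjMatrix ℝ) := by
    ext i j
    simp only [coe_reindexAlgEquiv, reindex_apply, submatrix_apply, adjMatrix_apply]
    exact if_congr e.symm.map_adj_iff.symm rfl rfl
  rw [specRad_eq_sSup_spectrum, specRad_eq_sSup_spectrum, hreindex, AlgEquiv.spectrum_eq]

section KplusK

variable {p q : ℕ} {hp : 0 < p} {hq : 0 < q}

@[simp]
theorem KplusK_adj_inl_inl (a b : Fin p) :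
    (KplusK p q hp hq).Adj (Sum.inl a) (Sum.inl b) ↔ a ≠ b := by
  simp [KplusK]

@[simp]
theorem KplusK_adj_inl_inr (a : Fin p) (c : Fin q) :
    (KplusK p q hp hq).Adj (Sum.inl a) (Sum.inr c) ↔ a = ⟨0, hp⟩ ∧ c = ⟨0, hq⟩ := by
  simp [KplusK]

@[simp]
theorem KplusK_adj_inr_inl (c : Fin q) (a : Fin p) :
    (KplusK p q hp hq).Adj (Sum.inr c) (Sum.inl a) ↔ a = ⟨0, hp⟩ ∧ c = ⟨0, hq⟩ := by
  rw [SimpleGraph.adj_comm, KplusK_adj_inl_inr]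

@[simp]
theorem KplusK_adj_inr_inr (c d : Fin q) :
    (KplusK p q hp hq).Adj (Sum.inr c) (Sum.inr d) ↔ c ≠ d := by
  simp [KplusK]

theorem specRad_KplusK_congr {p' q' : ℕ} {hp' : 0 < p'} {hq' : 0 < q'} (h : p = p')
    (h' : q = q') : specRad (KplusK p q hp hq) = specRad (KplusK p' q' hp' hq') := by
  subst h h'
  rfl

theorem KplusK_maxDegree_add_two_le [DecidableRel (KplusK p q hp hq).Adj] (hp2 : 2 ≤ p)
    (hq2 : 2 ≤ q) : (KplusK p q hp hq).maxDegree + 2 ≤ p + q := by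
  have hdeg : ∀ v, (KplusK p q hp hq).degree v + 2 ≤ p + q := by
    rintro (a | c)
    · simpa using (KplusK p q hp hq).degree_add_two_le_card_of_not_adj
        (w := Sum.inr ⟨1, hq2⟩) (by simp) (by simp)
    · simpa using (KplusK p q hp hq).degree_add_two_le_card_of_not_adj
        (w := Sum.inl ⟨1, hp2⟩) (by simp) (by simp)
  have := (KplusK p q hp hq).maxDegree_le_of_forall_degree_le (p + q - 2)
    fun v => Nat.le_sub_of_add_le (hdeg v)
  omega

end KplusK

def KplusK.commIso (p q : ℕ) (hp : 0 < p) (hq : 0 < q) : KplusK p q hp hq ≃g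
    KplusK q p hq hp where
  toEquiv := Equiv.sumComm (Fin p) (Fin q)
  map_rel_iff' := by rintro (a | c) (b | d) <;> simp [and_comm]

theorem sub_one_lt_specRad_KplusK_one (n : ℕ) (hn : 0 < n) :
    (n : ℝ) - 1 < specRad (KplusK n 1 hn Nat.one_pos) := by
  classical
  set t : ℝ := 1 / n
  have ht : 0 < t := by positivity
  have hnt : n * t = 1 := mul_one_div_cancel (by positivity)
  set x : Fin n ⊕ Fin 1 → ℝ := Sum.elim (fun _ => 1) (fun _ => t)
  have hxx : x ⬝ᵥ x = n + t ^ 2 := by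
    simp [x, dotProduct, Fintype.sum_sum_type, sq]
  have hAx : (KplusK n 1 hn Nat.one_pos).adjMatrix ℝ *ᵥ x =
      Sum.elim (fun a => (n - 1 : ℝ) + if a = ⟨0, hn⟩ then t else 0) (fun _ => 1) := by
    ext (a | c)
    · have hoff : (∑ b : Fin n, if a = b then (0 : ℝ) else 1) = n - 1 := by
        rw [Finset.sum_ite]
        simp [Finset.filter_ne, Nat.cast_pred hn]
      simp [x, mulVec, dotProduct, Fintype.sum_sum_type, hoff]
    · fin_cases c
      simp [x, mulVec, dotProduct, Fintype.sum_sum_type]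
  have hxAx : x ⬝ᵥ (KplusK n 1 hn Nat.one_pos).adjMatrix ℝ *ᵥ x = n * (n - 1) + 2 * t := by
    rw [hAx]
    simp [x, dotProduct, Fintype.sum_sum_type, Finset.sum_add_distrib]
    ring
  have hρ := dotProduct_adjMatrix_mulVec_le_specRad_mul (KplusK n 1 hn Nat.one_pos) x
  rw [hxx, hxAx] at hρ
  -- `(n - 1) * t ^ 2 = t - t ^ 2 < 2 * t`: the pendant weight `t` beats the quotient `n - 1`.
  nlinarith

theorem spectral_KplusK_pendant (l p q : ℕ) (hp : 0 < p) (hq : 0 < q) (hpq : p + q = l) :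
    specRad (KplusK p q hp hq) ≤ specRad (KplusK (l - 1) 1 (by omega) (by omega)) ∧
    (specRad (KplusK p q hp hq) = specRad (KplusK (l - 1) 1 (by omega) (by omega)) ↔
      p = 1 ∨ q = 1) := by
  classical
  by_cases hpendant : p = 1 ∨ q = 1
  · have heq : specRad (KplusK p q hp hq) = specRad (KplusK (l - 1) 1 (by omega) (by omega)) := by
      rcases hpendant with rfl | rfl
      · rw [(KplusK.commIso 1 q hp hq).specRad_eq]
        exact specRad_KplusK_congr (by omega) rfl
      · exact specRad_KplusK_congr (by omega) rfl
    exact ⟨heq.le, iff_of_true heq hpendant⟩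
  · have hdeg := KplusK_maxDegree_add_two_le (hp := hp) (hq := hq) (by omega) (by omega)
    have hlt : specRad (KplusK p q hp hq) < specRad (KplusK (l - 1) 1 (by omega) (by omega)) :=
      calc specRad (KplusK p q hp hq)
          ≤ (KplusK p q hp hq).maxDegree := specRad_le_maxDegree _
        _ ≤ ((l - 1 : ℕ) : ℝ) - 1 := by
          rw [le_sub_iff_add_le]
          exact_mod_cast (by omega : (KplusK p q hp hq).maxDegree + 1 ≤ l - 1)
        _ < _ := sub_one_lt_specRad_KplusK_one _ _
    exact ⟨hlt.le, iff_of_false hlt.ne hpendant⟩
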